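/- Positivity of the solution: under the hypotheses that 0 < α < 1/2, f : ℝ → ℝ is continuous with 0 < c₁ ≤ f ≤ c₂, h : [0,T] → ℝ is continuous with h ≥ 0, and λ > 0, any continuous u : [0,T] → ℝ satisfying u(t) = ∫₀^t (t−s)^{2α−1}/Γ(2α) · ( λ f(u(s))/(∫₀^T f(u(x)) dx)² + h(s) ) ds is nonnegative on [0,T], and strictly positive on (0,T]: in fact u(t) ≥ λ c₁/(c₂T)² · t^{2α}/Γ(2α+1) for all t ∈ [0,T]. -/

import Mathlib

/-!
The integrand is a nonnegative kernel times a forcing term bounded below by a constant: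
`c₁ T ≤ ∫₀^T f(u) ≤ c₂ T` gives `λ f(u(s)) / (∫₀^T f(u))² ≥ λ c₁ / (c₂ T)²`, and `h ≥ 0`.
Integrating the kernel `(t - s)^(2α - 1) / Γ(2α)` over `[0, t]` gives `t^(2α) / Γ(2α + 1)`.
-/

open Set Real intervalIntegral
open MeasureTheory (volume)

lemma intervalIntegrable_sub_rpow {p : ℝ} (hp : -1 < p) (t : ℝ) :
    IntervalIntegrable (fun s => (t - s) ^ p) volume 0 t := by
  simpa using ((intervalIntegrable_rpow' (a := 0) (b := t) hp).comp_sub_left t).symm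

lemma integral_sub_rpow_sub_one {β : ℝ} (hβ : 0 < β) (t : ℝ) :
    ∫ s in (0 : ℝ)..t, (t - s) ^ (β - 1) = t ^ β / β := by
  rw [integral_comp_sub_left (fun x : ℝ => x ^ (β - 1)) t, sub_self, sub_zero,
    integral_rpow (Or.inl (by linarith)), sub_add_cancel, zero_rpow hβ.ne', sub_zero]

lemma integral_sub_rpow_sub_one_div_Gamma {β : ℝ} (hβ : 0 < β) (t : ℝ) :
    ∫ s in (0 : ℝ)..t, (t - s) ^ (β - 1) / Gamma β = t ^ β / Gamma (β + 1) := by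
  rw [integral_div, integral_sub_rpow_sub_one hβ, Gamma_add_one hβ.ne', div_div]

lemma mul_rpow_div_Gamma_add_one_le_integral {β t K : ℝ} {g : ℝ → ℝ} (hβ : 0 < β)
    (ht : 0 ≤ t) (hg : ContinuousOn g (Icc 0 t)) (hKg : ∀ s ∈ Icc 0 t, K ≤ g s) :
    K * (t ^ β / Gamma (β + 1)) ≤ ∫ s in (0 : ℝ)..t, (t - s) ^ (β - 1) / Gamma β * g s := by
  have hkernel : IntervalIntegrable (fun s => (t - s) ^ (β - 1) / Gamma β) volume 0 t :=
    (intervalIntegrable_sub_rpow (by linarith) t).div_const _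
  rw [← integral_sub_rpow_sub_one_div_Gamma hβ, ← integral_const_mul]
  refine integral_mono_on ht (hkernel.const_mul K)
    (hkernel.mul_continuousOn (by rwa [uIcc_of_le ht])) fun s hs => ?_
  have : 0 ≤ t - s := sub_nonneg.mpr hs.2
  rw [mul_comm K]
  gcongr
  exact hKg s hs

lemma mul_le_integral_of_forall_le {a b c : ℝ} {g : ℝ → ℝ} (hab : a ≤ b)
    (hg : IntervalIntegrable g volume a b) (hcg : ∀ x ∈ Icc a b, c ≤ g x) :
    c * (b - a) ≤ ∫ x in a..b, g x := by
  simpa [mul_comm] using integral_mono_on hab intervalIntegrable_const hg hcg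

lemma integral_le_mul_of_forall_le {a b c : ℝ} {g : ℝ → ℝ} (hab : a ≤ b)
    (hg : IntervalIntegrable g volume a b) (hgc : ∀ x ∈ Icc a b, g x ≤ c) :
    ∫ x in a..b, g x ≤ c * (b - a) := by
  simpa [mul_comm] using integral_mono_on hab hg intervalIntegrable_const hgc

theorem stmt_15_general (α T c₁ c₂ lam : ℝ)
    (hα : 0 < α) (hT : 0 < T) (hlam : 0 < lam)
    (hc₁ : 0 < c₁)
    (f : ℝ → ℝ) (hfc : Continuous f) (hf : ∀ x, c₁ ≤ f x ∧ f x ≤ c₂)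
    (h : ℝ → ℝ) (hhc : ContinuousOn h (Set.Icc 0 T))
    (hh0 : ∀ s ∈ Set.Icc (0:ℝ) T, 0 ≤ h s)
    (u : ℝ → ℝ) (hu : ContinuousOn u (Set.Icc 0 T))
    (heq : ∀ t ∈ Set.Icc (0:ℝ) T,
      u t = ∫ s in (0:ℝ)..t, (t - s) ^ (2 * α - 1) / Real.Gamma (2 * α) *
          (lam * f (u s) / (∫ x in (0:ℝ)..T, f (u x)) ^ 2 + h s)) :
    ∀ t ∈ Set.Icc (0:ℝ) T,
      lam * c₁ / (c₂ * T) ^ 2 * (t ^ (2 * α) / Real.Gamma (2 * α + 1)) ≤ u t := by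
  intro t ht
  have hfu : ContinuousOn (fun x => f (u x)) (Icc 0 T) := hfc.comp_continuousOn hu
  have hfu_int : IntervalIntegrable (fun x => f (u x)) volume 0 T :=
    hfu.intervalIntegrable_of_Icc hT.le
  set I := ∫ x in (0:ℝ)..T, f (u x)
  have hI_pos : 0 < I := (mul_pos hc₁ hT).trans_le <| by
    simpa using mul_le_integral_of_forall_le hT.le hfu_int fun x _ => (hf (u x)).1
  have hI_le : I ≤ c₂ * T := by
    simpa using integral_le_mul_of_forall_le hT.le hfu_int fun x _ => (hf (u x)).2
  have hsub : Icc 0 t ⊆ Icc 0 T := Icc_subset_Icc_right ht.2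
  rw [heq t ht]
  refine mul_rpow_div_Gamma_add_one_le_integral (by positivity) ht.1
    (((continuousOn_const.mul (hfu.mono hsub)).div_const _).add (hhc.mono hsub))
    fun s hs => ?_
  have hforce : lam * c₁ / (c₂ * T) ^ 2 ≤ lam * f (u s) / I ^ 2 := by
    have := (hf (u s)).1
    gcongr
    nlinarith
  linarith [hh0 s (hsub hs)]

theorem stmt_15 (α T c₁ c₂ lam : ℝ)
    (hα : 0 < α) (hα' : α < 1 / 2) (hT : 0 < T) (hlam : 0 < lam)
    (hc₁ : 0 < c₁) (hc : c₁ ≤ c₂)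
    (f : ℝ → ℝ) (hfc : Continuous f) (hf : ∀ x, c₁ ≤ f x ∧ f x ≤ c₂)
    (h : ℝ → ℝ) (hhc : ContinuousOn h (Set.Icc 0 T))
    (hh0 : ∀ s ∈ Set.Icc (0:ℝ) T, 0 ≤ h s)
    (u : ℝ → ℝ) (hu : ContinuousOn u (Set.Icc 0 T))
    (heq : ∀ t ∈ Set.Icc (0:ℝ) T,
      u t = ∫ s in (0:ℝ)..t, (t - s) ^ (2 * α - 1) / Real.Gamma (2 * α) *
          (lam * f (u s) / (∫ x in (0:ℝ)..T, f (u x)) ^ 2 + h s)) :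
    ∀ t ∈ Set.Icc (0:ℝ) T,
      lam * c₁ / (c₂ * T) ^ 2 * (t ^ (2 * α) / Real.Gamma (2 * α + 1)) ≤ u t :=
  stmt_15_general α T c₁ c₂ lam hα hT hlam hc₁ f hfc hf h hhc hh0 u hu heq
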